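/- arXiv:0907.2260 — 5 statements merged into one kernel-verified Lean document; each statement's English description precedes it below -/
import Mathlib

section
/- Let f be the diagonal matrix polynomial diag(X₁, X₂, X₁X₂+1) in ℝ[X₁,X₂]^{3×3}. Then f(x) is not negative semidefinite for any x ∈ ℝ², and yet there do not exist matrix polynomials pᵢ ∈ ℝ[X₁,X₂]^{3×3} such that ∑ᵢ pᵢ* f pᵢ − I is a sum of hermitian squares. -/
/-!
Fix a monomial order and call a nonzero polynomial `p` parity-positive when its leading
coefficient is positive and its leading exponent is even in every variable, or its leading
coefficient is negative and its leading exponent is not. Together with `0` these polynomials form a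
quadratic module: a sum of two of them is again one (either one leading term dominates, or the
leading terms have the same exponent and their coefficients add with the same sign), and
multiplying by a nonzero square shifts the leading exponent by an even vector and the leading
coefficient by a positive factor. The module contains `-X₁`, `-X₂` and `-(X₁X₂ + 1)`, whose leading
exponents `(1,0)`, `(0,1)`, `(1,1)` are odd, but not `-1`. On the other hand, the `(0,0)` entry of
`∑ pᵢᵀ f pᵢ - 1 = ∑ Bⱼᵀ Bⱼ` writes `-1` as a sum of squares plus a combination of `-X₁`, `-X₂`,
`-(X₁X₂ + 1)` with square coefficients, which would put `-1` in every such module.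
-/

open Matrix MvPolynomial

/-- Sum of hermitian squares in `ℝ[X₁,X₂]^{3×3}`. -/
def IsSOHS23 (A : Matrix (Fin 3) (Fin 3) (MvPolynomial (Fin 2) ℝ)) : Prop :=
  ∃ (N : ℕ) (B : Fin N → Matrix (Fin 3) (Fin 3) (MvPolynomial (Fin 2) ℝ)),
    A = ∑ i, (B i)ᵀ * B i

namespace MonomialOrder

section Sign

variable {σ R : Type*} [Ring R]

open scoped Classical in
noncomputable def paritySign (d : σ →₀ ℕ) : R := if ∀ i, Even (d i) then 1 else -1

lemma paritySign_add_add_self (d c : σ →₀ ℕ) :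
    (paritySign (d + (c + c)) : R) = paritySign d := by
  have : (∀ i, Even ((d + (c + c)) i)) ↔ ∀ i, Even (d i) :=
    forall_congr' fun i => by simp [Nat.even_add]
  classical
  unfold paritySign
  exact if_congr this rfl rfl

end Sign

variable {σ R : Type*} (m : MonomialOrder σ)

lemma degree_add_of_degree_eq [CommSemiring R] {f g : MvPolynomial σ R}
    (h : m.degree f = m.degree g) (hfg : m.leadingCoeff f + m.leadingCoeff g ≠ 0) :
    m.degree (f + g) = m.degree f ∧
      m.leadingCoeff (f + g) = m.leadingCoeff f + m.leadingCoeff g := by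
  have hcoeff : (f + g).coeff (m.degree f) = m.leadingCoeff f + m.leadingCoeff g := by
    rw [coeff_add, leadingCoeff, leadingCoeff, h]
  have hdeg : m.degree (f + g) = m.degree f := by
    refine m.toSyn.injective (le_antisymm ?_ (m.le_degree ?_))
    · simpa [h] using m.degree_add_le (f := f) (g := g)
    · rwa [mem_support_iff, hcoeff]
  exact ⟨hdeg, by rw [leadingCoeff, hdeg, hcoeff]⟩

variable [CommRing R] [LinearOrder R] [IsStrictOrderedRing R]

def ParityPos (p : MvPolynomial σ R) : Prop :=
  0 < paritySign (m.degree p) * m.leadingCoeff p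

variable {m}

lemma ParityPos.add_of_degree_le {a b : MvPolynomial σ R} (ha : m.ParityPos a)
    (hb : m.ParityPos b) (hab : m.degree b ≼[m] m.degree a) : m.ParityPos (a + b) := by
  rcases hab.lt_or_eq with hlt | heq
  · rwa [ParityPos, m.degree_add_of_lt hlt, m.leadingCoeff_add_of_lt hlt]
  · have heq : m.degree b = m.degree a := m.toSyn.injective heq
    have hpos : 0 < paritySign (m.degree a) * (m.leadingCoeff a + m.leadingCoeff b) := by
      rw [ParityPos, heq] at hb
      rw [mul_add]
      exact add_pos ha hb
    obtain ⟨hd, hc⟩ := m.degree_add_of_degree_eq heq.symm fun h => by simp [h] at hpos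
    rwa [ParityPos, hd, hc]

lemma ParityPos.add {a b : MvPolynomial σ R} (ha : m.ParityPos a) (hb : m.ParityPos b) :
    m.ParityPos (a + b) := by
  rcases le_total (m.toSyn (m.degree b)) (m.toSyn (m.degree a)) with h | h
  · exact ha.add_of_degree_le hb h
  · rw [add_comm]
    exact hb.add_of_degree_le ha h

lemma ParityPos.mul_mul_self {a : MvPolynomial σ R} (ha : m.ParityPos a)
    {b : MvPolynomial σ R} (hb : b ≠ 0) : m.ParityPos (a * (b * b)) := by
  have ha0 : a ≠ 0 := by
    rintro rfl
    simp [ParityPos] at ha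
  rw [ParityPos, m.degree_mul ha0 (mul_ne_zero hb hb), m.degree_mul hb hb,
    paritySign_add_add_self, leadingCoeff_mul, leadingCoeff_mul, ← mul_assoc]
  exact mul_pos ha (mul_self_pos.2 (m.leadingCoeff_ne_zero_iff.2 hb))

variable (m)

def parityCone : AddSubmonoid (MvPolynomial σ R) where
  carrier := {p | p = 0 ∨ m.ParityPos p}
  zero_mem' := Or.inl rfl
  add_mem' := by
    rintro a b (rfl | ha) (rfl | hb)
    · simp
    · simp [hb]
    · simp [ha]
    · exact Or.inr (ha.add hb)

lemma one_mem_parityCone : (1 : MvPolynomial σ R) ∈ m.parityCone := by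
  right
  rw [ParityPos, degree_one, leadingCoeff_one, paritySign, if_pos fun _ => ⟨0, rfl⟩, mul_one]
  exact one_pos

lemma neg_one_notMem_parityCone : (-1 : MvPolynomial σ R) ∉ m.parityCone := by
  rintro (h | h)
  · exact one_ne_zero (neg_eq_zero.1 h)
  · rw [ParityPos, degree_neg, degree_one, leadingCoeff_neg, leadingCoeff_one, paritySign,
      if_pos fun _ => ⟨0, rfl⟩] at h
    norm_num at h

lemma mul_mul_self_mem_parityCone {a : MvPolynomial σ R} (ha : a ∈ m.parityCone)
    (b : MvPolynomial σ R) : a * (b * b) ∈ m.parityCone := by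
  rcases ha with rfl | ha
  · simp
  rcases eq_or_ne b 0 with rfl | hb
  · simp
  exact Or.inr (ha.mul_mul_self hb)

lemma neg_mem_parityCone {p : MvPolynomial σ R} (hp : 0 < m.leadingCoeff p)
    (hd : ¬ ∀ i, Even (m.degree p i)) : -p ∈ m.parityCone := by
  right
  rw [ParityPos, degree_neg, leadingCoeff_neg, paritySign, if_neg hd]
  simpa using hp

lemma neg_X_mem_parityCone (i : σ) : (-X i : MvPolynomial σ R) ∈ m.parityCone :=
  m.neg_mem_parityCone (by simp) fun h => by simpa [degree_X] using h i

lemma neg_X_mul_X_add_one_mem_parityCone {i j : σ} (hij : i ≠ j) :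
    (-(X i * X j + 1) : MvPolynomial σ R) ∈ m.parityCone := by
  have hXX : m.Monic (X i * X j : MvPolynomial σ R) := m.monic_X.mul m.monic_X
  have hdeg : m.degree (X i * X j : MvPolynomial σ R) =
      Finsupp.single i 1 + Finsupp.single j 1 := by
    rw [m.degree_mul_of_mul_leadingCoeff_ne_zero (by simp), degree_X, degree_X]
  have hlt : m.degree (1 : MvPolynomial σ R) ≺[m] m.degree (X i * X j : MvPolynomial σ R) := by
    rw [degree_one, hdeg, map_zero, toSyn_lt_iff_ne_zero, ne_eq, toSyn_eq_zero_iff]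
    exact fun h => by simpa using congrArg (· i) h
  refine m.neg_mem_parityCone ?_ fun h => ?_
  · rw [m.leadingCoeff_add_of_lt hlt, hXX.leadingCoeff_eq_one]
    exact one_pos
  · simpa [m.degree_add_of_lt hlt, hdeg, Finsupp.single_apply, hij.symm] using h i

end MonomialOrder

namespace Matrix

variable {n R : Type*} [Fintype n] [DecidableEq n] [CommRing R] {C : AddSubmonoid R}

lemma transpose_mul_diagonal_mul_apply_self_mem (hC : ∀ a ∈ C, ∀ b, a * (b * b) ∈ C)
    {v : n → R} (hv : ∀ k, v k ∈ C) (q : Matrix n n R) (i : n) :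
    (qᵀ * diagonal v * q) i i ∈ C := by
  rw [mul_apply]
  refine sum_mem fun k _ => ?_
  rw [mul_diagonal, transpose_apply, mul_comm _ (v k), mul_assoc]
  exact hC _ (hv k) _

lemma transpose_mul_self_apply_self_mem (hC : ∀ a ∈ C, ∀ b, a * (b * b) ∈ C) (h1 : 1 ∈ C)
    (q : Matrix n n R) (i : n) : (qᵀ * q) i i ∈ C := by
  simpa using transpose_mul_diagonal_mul_apply_self_mem hC (fun _ => h1) q i

lemma neg_one_mem_of_sum_transpose_mul_diagonal_mul_sub_one_eq {ι κ : Type*} [Fintype ι]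
    [Fintype κ] [Nonempty n] (hC : ∀ a ∈ C, ∀ b, a * (b * b) ∈ C) (h1 : 1 ∈ C) {v : n → R}
    (hv : ∀ k, -v k ∈ C) {p : ι → Matrix n n R} {B : κ → Matrix n n R}
    (h : ∑ j, (p j)ᵀ * diagonal v * p j - 1 = ∑ j, (B j)ᵀ * B j) : (-1 : R) ∈ C := by
  have hneg : -1 = ∑ j, (B j)ᵀ * B j + ∑ j, (p j)ᵀ * diagonal (fun k => -v k) * p j := by
    simp only [← diagonal_neg, Matrix.mul_neg, Matrix.neg_mul, Finset.sum_neg_distrib, ← h]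
    abel
  obtain ⟨i⟩ := ‹Nonempty n›
  have hii := congrFun₂ hneg i i
  rw [Matrix.neg_apply, one_apply_eq, Matrix.add_apply, Matrix.sum_apply, Matrix.sum_apply] at hii
  rw [hii]
  exact add_mem (sum_mem fun j _ => transpose_mul_self_apply_self_mem hC h1 _ _)
    (sum_mem fun j _ => transpose_mul_diagonal_mul_apply_self_mem hC hv _ _)

end Matrix

lemma not_posSemidef_neg_diagonal (a b : ℝ) :
    ¬ (-diagonal ![a, b, a * b + 1]).PosSemidef := by
  rw [diagonal_neg, posSemidef_diagonal_iff]
  intro h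
  have ha := h 0
  have hb := h 1
  have hab := h 2
  simp at ha hb hab
  nlinarith

/-- **Example 5.** The diagonal matrix polynomial `f = diag(X₁, X₂, X₁X₂+1)` is nowhere
negative semidefinite on `ℝ²`, yet no finite family `pᵢ` satisfies
`∑ᵢ pᵢᵀ f pᵢ − 1 ∈` sums of hermitian squares. -/
theorem stmt7 (f : Matrix (Fin 3) (Fin 3) (MvPolynomial (Fin 2) ℝ))
    (hfd : f = Matrix.diagonal ![X 0, X 1, X 0 * X 1 + 1]) :
    (∀ x : Fin 2 → ℝ, ¬ (-(f.map (MvPolynomial.eval x))).PosSemidef) ∧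
      ¬ ∃ (N : ℕ) (p : Fin N → Matrix (Fin 3) (Fin 3) (MvPolynomial (Fin 2) ℝ)),
          IsSOHS23 ((∑ i, (p i)ᵀ * f * p i) - 1) := by
  subst hfd
  refine ⟨fun x => ?_, ?_⟩
  · rw [diagonal_map (map_zero _)]
    convert not_posSemidef_neg_diagonal (x 0) (x 1) using 4
    ext k
    fin_cases k <;> simp
  · rintro ⟨N, p, M, B, hEq⟩
    have hgen : ∀ k, -(![X 0, X 1, X 0 * X 1 + 1] : Fin 3 → MvPolynomial (Fin 2) ℝ) k ∈
        (MonomialOrder.lex : MonomialOrder (Fin 2)).parityCone := by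
      intro k
      fin_cases k
      · exact MonomialOrder.lex.neg_X_mem_parityCone 0
      · exact MonomialOrder.lex.neg_X_mem_parityCone 1
      · exact MonomialOrder.lex.neg_X_mul_X_add_one_mem_parityCone (by decide)
    exact MonomialOrder.lex.neg_one_notMem_parityCone <|
      neg_one_mem_of_sum_transpose_mul_diagonal_mul_sub_one_eq
        (fun _ => MonomialOrder.lex.mul_mul_self_mem_parityCone)
        MonomialOrder.lex.one_mem_parityCone hgen hEq
end

section
/- Let 𝒜 be a ring with involution containing 1/2, and M ⊆ Sym 𝒜 a quadratic module. Then the set H_M(𝒜) = {a ∈ 𝒜 : ∃N ∈ ℕ, N − a*a ∈ M} is a subring of 𝒜 closed under the involution. -/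
/-!
Closure under addition and multiplication comes from explicit sums-of-squares identities,
e.g. `2(N + K) - (a + b)*(a + b) = (a - b)*(a - b) + 2(N - a*a) + 2(K - b*b)` and
`NK - (ab)*(ab) = b*(N - a*a)b + N(K - b*b)`.
For the involution, `N - a*a ∈ M` gives `N(N - aa*) = (N - aa*)² + a(N - a*a)a* ∈ M`; taking
`N = 4^k` and conjugating `k` times by `1/2` divides out the factor `N`, so `N - aa* ∈ M`.
-/

section

variable {A : Type*} [Ring A]

theorem commute_of_add_self_eq_one {u : A} (hu : u + u = 1) (a : A) : Commute u a := by
  let : Invertible (2 : A) := ⟨u, by rw [mul_two, hu], by rw [two_mul, hu]⟩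
  exact (Commute.ofNat_left 2 a).invOf_left

theorem mul_four_mul_mul_eq_of_add_self_eq_one {u : A} (hu : u + u = 1) (m : A) :
    u * (4 * m) * u = m := by
  calc u * (4 * m) * u = u * (4 * (u * m)) := by
        rw [mul_assoc, mul_assoc, ← (commute_of_add_self_eq_one hu m).eq]
    _ = (u + u) * (u + u) * m := by noncomm_ring
    _ = m := by rw [hu, one_mul, one_mul]

theorem mul_natCast_sub_mul (n : ℕ) (x m y : A) :
    x * ((n : A) - m) * y = n * (x * y) - x * m * y := by
  rw [mul_sub, sub_mul, ← (Nat.cast_commute n x).eq, mul_assoc]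

theorem star_eq_self_of_add_self_eq_one [StarRing A] {u : A} (hu : u + u = 1) : star u = u := by
  have hsu : star u + star u = 1 := by rw [← star_add, hu, star_one]
  exact left_inv_eq_right_inv (by rw [mul_two, hsu]) (by rw [two_mul, hu])

structure IsQuadraticModule [Star A] (M : Set A) : Prop where
  one_mem : (1 : A) ∈ M
  add_mem : ∀ ⦃m m' : A⦄, m ∈ M → m' ∈ M → m + m' ∈ M
  star_mul_mul_mem : ∀ ⦃m : A⦄, m ∈ M → ∀ a : A, star a * m * a ∈ M

def boundedElements [Star A] (M : Set A) : Set A :=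
  {a | ∃ N : ℕ, (N : A) - star a * a ∈ M}

namespace IsQuadraticModule

variable [StarRing A] {M : Set A}

theorem star_mul_self_mem (hM : IsQuadraticModule M) (a : A) : star a * a ∈ M := by
  simpa using hM.star_mul_mul_mem hM.one_mem a

theorem zero_mem (hM : IsQuadraticModule M) : (0 : A) ∈ M := by
  simpa using hM.star_mul_self_mem 0

def toAddSubmonoid (hM : IsQuadraticModule M) : AddSubmonoid A where
  carrier := M
  add_mem' := fun ha hb => hM.add_mem ha hb
  zero_mem' := hM.zero_mem

theorem natCast_mul_mem (hM : IsQuadraticModule M) (n : ℕ) {m : A} (hm : m ∈ M) :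
    (n : A) * m ∈ M := by
  rw [← nsmul_eq_mul]
  exact hM.toAddSubmonoid.nsmul_mem hm n

theorem natCast_mem (hM : IsQuadraticModule M) (n : ℕ) : (n : A) ∈ M := by
  simpa using hM.natCast_mul_mem n hM.one_mem

theorem natCast_sub_mem_of_le (hM : IsQuadraticModule M) {x : A} {N K : ℕ} (hNK : N ≤ K)
    (h : (N : A) - x ∈ M) : (K : A) - x ∈ M := by
  have key := hM.add_mem (hM.natCast_mem (K - N)) h
  rwa [Nat.cast_sub hNK, sub_add_sub_cancel] at key

theorem mem_of_four_pow_mul_mem (hM : IsQuadraticModule M) {u : A} (hu : u + u = 1) (k : ℕ)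
    {m : A} (hm : ((4 ^ k : ℕ) : A) * m ∈ M) : m ∈ M := by
  induction k generalizing m with
  | zero => simpa using hm
  | succ k ih =>
    refine ih ?_
    rw [pow_succ', Nat.cast_mul, Nat.cast_ofNat, mul_assoc] at hm
    have key := hM.star_mul_mul_mem hm u
    rwa [star_eq_self_of_add_self_eq_one hu, mul_four_mul_mul_eq_of_add_self_eq_one hu] at key

theorem natCast_mul_natCast_sub_mul_star_mem (hM : IsQuadraticModule M) {a : A} {N : ℕ}
    (h : (N : A) - star a * a ∈ M) : (N : A) * ((N : A) - a * star a) ∈ M := by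
  have key := hM.add_mem (hM.star_mul_self_mem ((N : A) - a * star a))
    (by simpa using hM.star_mul_mul_mem h (star a))
  rw [mul_natCast_sub_mul, star_sub, star_mul, star_star, star_natCast, sub_mul,
    mul_sub (a * star a), ← (Nat.cast_commute N (a * star a)).eq] at key
  convert key using 1
  noncomm_ring

theorem star_mem_boundedElements (hM : IsQuadraticModule M) {u : A} (hu : u + u = 1) {a : A}
    (ha : a ∈ boundedElements M) : star a ∈ boundedElements M := by
  obtain ⟨N, hN⟩ := ha
  have hle : N ≤ 4 ^ N := (Nat.lt_pow_self (by norm_num)).le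
  refine ⟨4 ^ N, ?_⟩
  rw [star_star]
  exact hM.mem_of_four_pow_mul_mem hu N
    (by exact_mod_cast hM.natCast_mul_natCast_sub_mul_star_mem (hM.natCast_sub_mem_of_le hle hN))

theorem add_mem_boundedElements (hM : IsQuadraticModule M) {a b : A}
    (ha : a ∈ boundedElements M) (hb : b ∈ boundedElements M) : a + b ∈ boundedElements M := by
  obtain ⟨N, hN⟩ := ha
  obtain ⟨K, hK⟩ := hb
  refine ⟨2 * (N + K), ?_⟩
  have key := hM.add_mem (hM.star_mul_self_mem (a - b))
    (hM.add_mem (hM.natCast_mul_mem 2 hN) (hM.natCast_mul_mem 2 hK))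
  convert key using 1
  push_cast
  rw [star_sub, star_add]
  noncomm_ring

theorem mul_mem_boundedElements (hM : IsQuadraticModule M) {a b : A}
    (ha : a ∈ boundedElements M) (hb : b ∈ boundedElements M) : a * b ∈ boundedElements M := by
  obtain ⟨N, hN⟩ := ha
  obtain ⟨K, hK⟩ := hb
  refine ⟨N * K, ?_⟩
  have key := hM.add_mem (hM.star_mul_mul_mem hN b) (hM.natCast_mul_mem N hK)
  rw [mul_natCast_sub_mul] at key
  convert key using 1
  rw [Nat.cast_mul, star_mul]
  noncomm_ring

def boundedSubring (hM : IsQuadraticModule M) : Subring A where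
  carrier := boundedElements M
  zero_mem' := ⟨1, by simpa using hM.one_mem⟩
  one_mem' := ⟨1, by simpa using hM.zero_mem⟩
  neg_mem' := fun ⟨N, hN⟩ => ⟨N, by simpa using hN⟩
  add_mem' := hM.add_mem_boundedElements
  mul_mem' := hM.mul_mem_boundedElements

end IsQuadraticModule

end

theorem stmt8_general (A : Type*) [Ring A] [StarRing A]
    (half : A) (h2 : half + half = 1)
    (M : Set A)
    (h1 : (1 : A) ∈ M)
    (hadd : ∀ m ∈ M, ∀ m' ∈ M, m + m' ∈ M)
    (hconj : ∀ m ∈ M, ∀ a : A, star a * m * a ∈ M) :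
    (∃ S : Subring A, (S : Set A) = {a : A | ∃ N : ℕ, (N : A) - star a * a ∈ M}) ∧
      ∀ a : A, (∃ N : ℕ, (N : A) - star a * a ∈ M) →
        ∃ N : ℕ, (N : A) - star (star a) * star a ∈ M := by
  have hM : IsQuadraticModule M := ⟨h1, fun _ _ hm hm' => hadd _ hm _ hm', hconj⟩
  exact ⟨⟨hM.boundedSubring, rfl⟩, fun _ ha => hM.star_mem_boundedElements h2 ha⟩

/-- **Vidav's theorem.** Let `A` be a ring with involution containing `1/2` and
`M ⊆ Sym A` a quadratic module. Then the set of bounded elements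
`H_M(A) = {a | ∃ N, N − a*a ∈ M}` is a subring of `A` closed under the involution. -/
theorem stmt8 (A : Type*) [Ring A] [StarRing A]
    (half : A) (h2 : half + half = 1)
    (M : Set A)
    (hsym : ∀ m ∈ M, star m = m)
    (h1 : (1 : A) ∈ M)
    (hadd : ∀ m ∈ M, ∀ m' ∈ M, m + m' ∈ M)
    (hconj : ∀ m ∈ M, ∀ a : A, star a * m * a ∈ M) :
    (∃ S : Subring A, (S : Set A) = {a : A | ∃ N : ℕ, (N : A) - star a * a ∈ M}) ∧
      ∀ a : A, (∃ N : ℕ, (N : A) - star a * a ∈ M) →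
        ∃ N : ℕ, (N : A) - star (star a) * star a ∈ M :=
  stmt8_general A half h2 M h1 hadd hconj
end

section
/- Let G ⊆ Sym ℝ[X₁,…,Xₙ]^{t×t}. For each x ∈ S_G and each unit vector v ∈ ℝᵗ, the linear form L on Sym ℝ[X̄]^{t×t} defined by L(p) = ⟨p(x)v, v⟩ is a pure state on (Sym ℝ[X̄]^{t×t}, M_G). -/
open Matrix

variable (n t : ℕ)

/-- Membership in the quadratic module `M_G` generated by `G` in `ℝ[X̄]^{t×t}`. -/
def InQM (G : Set (Matrix (Fin t) (Fin t) (MvPolynomial (Fin n) ℝ)))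
    (f : Matrix (Fin t) (Fin t) (MvPolynomial (Fin n) ℝ)) : Prop :=
  ∃ (N : ℕ) (g p : Fin N → Matrix (Fin t) (Fin t) (MvPolynomial (Fin n) ℝ)),
    (∀ i, g i = 1 ∨ g i ∈ G) ∧ f = ∑ i, (p i)ᵀ * g i * p i

/-- The positivity set `S_G ⊆ ℝⁿ`. -/
def SG (G : Set (Matrix (Fin t) (Fin t) (MvPolynomial (Fin n) ℝ))) :
    Set (Fin n → ℝ) :=
  {x | ∀ g ∈ G, (g.map (MvPolynomial.eval x)).PosSemidef}

/-- `M_G` is archimedean. -/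
def IsArch (G : Set (Matrix (Fin t) (Fin t) (MvPolynomial (Fin n) ℝ))) : Prop :=
  ∀ a : Matrix (Fin t) (Fin t) (MvPolynomial (Fin n) ℝ),
    ∃ N : ℕ, InQM n t G ((N : Matrix (Fin t) (Fin t) (MvPolynomial (Fin n) ℝ)) - aᵀ * a)

/-- The real vector space of symmetric matrix polynomials. -/
noncomputable def SymSub : Submodule ℝ (Matrix (Fin t) (Fin t) (MvPolynomial (Fin n) ℝ)) where
  carrier := {p | pᵀ = p}
  add_mem' := by
    intro a b ha hb
    simp only [Set.mem_setOf_eq, Matrix.transpose_add] at *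
    rw [ha, hb]
  zero_mem' := by simp
  smul_mem' := by
    intro c a ha
    simp only [Set.mem_setOf_eq, Matrix.transpose_smul] at *
    rw [ha]

theorem one_mem_SymSub : (1 : Matrix (Fin t) (Fin t) (MvPolynomial (Fin n) ℝ)) ∈ SymSub n t :=
  Matrix.transpose_one

/-- A state on `(Sym ℝ[X̄]^{t×t}, M_G)`. -/
def IsState (G : Set (Matrix (Fin t) (Fin t) (MvPolynomial (Fin n) ℝ)))
    (L : SymSub n t →ₗ[ℝ] ℝ) : Prop :=
  L ⟨1, one_mem_SymSub n t⟩ = 1 ∧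
    ∀ (p : Matrix (Fin t) (Fin t) (MvPolynomial (Fin n) ℝ)) (hp : p ∈ SymSub n t),
      InQM n t G p → 0 ≤ L ⟨p, hp⟩

/-- A pure state: an extreme point of the convex set of states. -/
def IsPure (G : Set (Matrix (Fin t) (Fin t) (MvPolynomial (Fin n) ℝ)))
    (L : SymSub n t →ₗ[ℝ] ℝ) : Prop :=
  IsState n t G L ∧
    ∀ (L₁ L₂ : SymSub n t →ₗ[ℝ] ℝ) (θ : ℝ), IsState n t G L₁ → IsState n t G L₂ →
      0 < θ → θ < 1 → L = θ • L₁ + (1 - θ) • L₂ → L₁ = L ∧ L₂ = L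

/-- `L` is the state of point evaluation at `(x, v)`. -/
def Represents (L : SymSub n t →ₗ[ℝ] ℝ) (x : Fin n → ℝ) (v : Fin t → ℝ) : Prop :=
  ∀ (p : Matrix (Fin t) (Fin t) (MvPolynomial (Fin n) ℝ)) (hp : p ∈ SymSub n t),
    L ⟨p, hp⟩ = dotProduct (Matrix.mulVec (p.map (MvPolynomial.eval x)) v) v

/-!
Positivity of `L p = ⟨p(x)v, v⟩` on `M_G` is the identity `⟨(qᵀgq)(x)v, v⟩ = ⟨g(x)w, w⟩` with
`w = q(x)v`. For purity, let `L = θL₁ + (1 - θ)L₂` with states `L₁, L₂`. If `b(x)v = 0` then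
`L(bᵀb) = 0`, so `L₁(bᵀb) = 0`, and the Cauchy–Schwarz argument for the positive form `L₁` gives
`L₁(aᵀb + bᵀa) = 0` for every `a`. Every symmetric `p` is `L(p)·1` plus two elements of this form,
so `L₁ = L`.
-/

section PointEvaluation

variable {n t}

local notation "Mat" => Matrix (Fin t) (Fin t) (MvPolynomial (Fin n) ℝ)

lemma Matrix.transpose_mul_mulVec_dotProduct {m R : Type*} [Fintype m] [CommSemiring R]
    (A B : Matrix m m R) (v : m → R) : (Aᵀ * B) *ᵥ v ⬝ᵥ v = (A *ᵥ v) ⬝ᵥ (B *ᵥ v) := by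
  rw [← mulVec_mulVec, mulVec_transpose, ← dotProduct_mulVec, dotProduct_comm]

noncomputable def hermSq (b : Mat) : SymSub n t :=
  ⟨bᵀ * b, by show (bᵀ * b)ᵀ = _; rw [transpose_mul, transpose_transpose]⟩

noncomputable def symProd (a b : Mat) : SymSub n t :=
  ⟨aᵀ * b + bᵀ * a, by
    show (aᵀ * b + bᵀ * a)ᵀ = _
    rw [transpose_add, transpose_mul, transpose_mul, transpose_transpose, transpose_transpose,
      add_comm]⟩

lemma hermSq_add_smul (a b : Mat) (l : ℝ) :
    hermSq (a + l • b) = hermSq a + l • symProd a b + (l * l) • hermSq b := by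
  apply Subtype.ext
  simp only [hermSq, symProd, Submodule.coe_add, Submodule.coe_smul, transpose_add,
    transpose_smul, add_mul, mul_add, smul_mul, Matrix.mul_smul, smul_add, smul_smul]
  abel

lemma symProd_half_one {r : SymSub n t} : symProd ((1 / 2 : ℝ) • (1 : Mat)) r = r := by
  apply Subtype.ext
  have hr : (r : Mat)ᵀ = r := r.2
  simp only [symProd, transpose_smul, transpose_one, smul_mul, Matrix.mul_smul, one_mul, mul_one,
    hr]
  rw [← add_smul]
  norm_num

/-- Cauchy–Schwarz for a functional that is nonnegative on hermitian squares. -/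
lemma apply_symProd_eq_zero {L : SymSub n t →ₗ[ℝ] ℝ} (hL : ∀ b, 0 ≤ L (hermSq b)) {b : Mat}
    (hb : L (hermSq b) = 0) (a : Mat) : L (symProd a b) = 0 := by
  have hdiscrim := discrim_le_zero (a := L (hermSq b)) (b := L (symProd a b))
    (c := L (hermSq a)) fun l => by
      have := hL (a + l • b)
      rw [hermSq_add_smul, map_add, map_add, map_smul, map_smul, smul_eq_mul, smul_eq_mul] at this
      linarith
  simpa [discrim, hb] using hdiscrim

lemma IsState.apply_hermSq_nonneg {G : Set Mat} {L : SymSub n t →ₗ[ℝ] ℝ}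
    (hL : IsState n t G L) (b : Mat) : 0 ≤ L (hermSq b) :=
  hL.2 _ _ ⟨1, fun _ => 1, fun _ => b, fun _ => Or.inl rfl, by simp⟩

noncomputable def evalAt (x : Fin n → ℝ) : Mat →ₐ[ℝ] Matrix (Fin t) (Fin t) ℝ :=
  (MvPolynomial.aeval x).mapMatrix

lemma evalAt_transpose (x : Fin n → ℝ) (a : Mat) : evalAt x aᵀ = (evalAt x a)ᵀ := by
  simp only [evalAt, AlgHom.mapMatrix_apply, transpose_map]

noncomputable def evalState (x : Fin n → ℝ) (v : Fin t → ℝ) : SymSub n t →ₗ[ℝ] ℝ where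
  toFun p := evalAt x p *ᵥ v ⬝ᵥ v
  map_add' p q := by simp only [Submodule.coe_add, map_add, add_mulVec, add_dotProduct]
  map_smul' c p := by
    simp only [Submodule.coe_smul, map_smul, smul_mulVec, smul_dotProduct, RingHom.id_apply]

lemma evalState_apply (x : Fin n → ℝ) (v : Fin t → ℝ) (p : SymSub n t) :
    evalState x v p = evalAt x p *ᵥ v ⬝ᵥ v := rfl

lemma represents_evalState (x : Fin n → ℝ) (v : Fin t → ℝ) :
    Represents n t (evalState x v) x v := fun _ _ => rfl

lemma evalState_transpose_mul (x : Fin n → ℝ) (v : Fin t → ℝ) (a b : Mat) (h) :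
    evalState x v ⟨aᵀ * b, h⟩ = (evalAt x a *ᵥ v) ⬝ᵥ (evalAt x b *ᵥ v) := by
  rw [evalState_apply, map_mul, evalAt_transpose, transpose_mul_mulVec_dotProduct]

lemma isState_evalState {G : Set Mat} {x : Fin n → ℝ} (hx : x ∈ SG n t G) {v : Fin t → ℝ}
    (hv : v ⬝ᵥ v = 1) : IsState n t G (evalState x v) := by
  refine ⟨by rw [evalState_apply, map_one, one_mulVec, hv], ?_⟩
  rintro _ _ ⟨N, g, q, hg, rfl⟩
  rw [evalState_apply, map_sum, sum_mulVec, sum_dotProduct]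
  refine Finset.sum_nonneg fun i _ => ?_
  have hgi : (evalAt x (g i)).PosSemidef := by
    rcases hg i with h | h
    · rw [h, map_one]
      exact PosSemidef.one
    · simpa [evalAt, AlgHom.mapMatrix_apply, MvPolynomial.coe_aeval_eq_eval] using hx _ h
  rw [mul_assoc, map_mul, evalAt_transpose, transpose_mul_mulVec_dotProduct, map_mul,
    ← mulVec_mulVec]
  simpa using hgi.dotProduct_mulVec_nonneg (evalAt x (q i) *ᵥ v)

noncomputable def perpProj (v : Fin t → ℝ) : Mat := 1 - (vecMulVec v v).map MvPolynomial.C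

lemma perpProj_transpose (v : Fin t → ℝ) : (perpProj v : Mat)ᵀ = perpProj v := by
  rw [perpProj, transpose_sub, transpose_one, ← transpose_map, transpose_vecMulVec]

lemma evalAt_perpProj_mulVec (x : Fin n → ℝ) (v w : Fin t → ℝ) :
    evalAt x (perpProj v : Mat) *ᵥ w = w - (v ⬝ᵥ w) • v := by
  have hC : evalAt x ((vecMulVec v v).map MvPolynomial.C) = vecMulVec v v := by
    ext i j
    simp [evalAt, AlgHom.mapMatrix_apply]
  rw [perpProj, map_sub, map_one, hC, sub_mulVec, one_mulVec, vecMulVec_mulVec, op_smul_eq_smul]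

lemma eq_evalState_of_apply_symProd_eq_zero {x : Fin n → ℝ} {v : Fin t → ℝ} (hv : v ⬝ᵥ v = 1)
    {L : SymSub n t →ₗ[ℝ] ℝ} (h1 : L ⟨1, one_mem_SymSub n t⟩ = 1)
    (h0 : ∀ a b : Mat, evalAt x b *ᵥ v = 0 → L (symProd a b) = 0) : L = evalState x v := by
  ext p
  -- With `Q = 1 - vvᵀ`, the remainder `r = p - L(p)·1 - (pQ + Qp)` satisfies `r(x)v = 0`,
  -- and `r = symProd (½·1) r` since `r` is symmetric.
  set c := evalState x v p
  set r : SymSub n t := p - c • ⟨1, one_mem_SymSub n t⟩ - symProd p (perpProj v) with hr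
  have hpT : (p : Mat)ᵀ = p := p.2
  have hrv : evalAt x r *ᵥ v = 0 := by
    simp only [hr, Submodule.coe_sub, Submodule.coe_smul, symProd, perpProj_transpose, hpT,
      map_sub, map_add, map_smul, map_mul, map_one, sub_mulVec, add_mulVec, smul_mulVec,
      one_mulVec, ← mulVec_mulVec, evalAt_perpProj_mulVec, hv, c, evalState_apply]
    rw [one_smul, sub_self, mulVec_zero, zero_add, dotProduct_comm v, sub_self]
  have hp : p = c • ⟨1, one_mem_SymSub n t⟩ + symProd p (perpProj v)
      + symProd ((1 / 2 : ℝ) • 1) r := by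
    rw [symProd_half_one, hr]
    abel
  have hQv : evalAt x (perpProj v : Mat) *ᵥ v = 0 := by
    rw [evalAt_perpProj_mulVec, hv, one_smul, sub_self]
  rw [hp, map_add, map_add, map_smul, h1, h0 _ _ hQv, h0 _ _ hrv, smul_eq_mul, mul_one,
    add_zero, add_zero]

lemma IsState.eq_evalState_of_eq_smul_add_smul {G : Set Mat} {x : Fin n → ℝ} {v : Fin t → ℝ}
    (hv : v ⬝ᵥ v = 1) {L₁ L₂ : SymSub n t →ₗ[ℝ] ℝ} {θ : ℝ} (h₁ : IsState n t G L₁)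
    (h₂ : IsState n t G L₂) (hθ₀ : 0 < θ) (hθ₁ : θ < 1)
    (h : evalState x v = θ • L₁ + (1 - θ) • L₂) : L₁ = evalState x v := by
  refine eq_evalState_of_apply_symProd_eq_zero hv h₁.1 fun a b hb => ?_
  refine apply_symProd_eq_zero h₁.apply_hermSq_nonneg ?_ a
  have hsq : evalState x v (hermSq b) = 0 := by
    rw [hermSq, evalState_transpose_mul, hb, zero_dotProduct]
  rw [h, LinearMap.add_apply, LinearMap.smul_apply, LinearMap.smul_apply, smul_eq_mul,
    smul_eq_mul] at hsq
  nlinarith [h₁.apply_hermSq_nonneg b, h₂.apply_hermSq_nonneg b]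

lemma isPure_evalState {G : Set Mat} {x : Fin n → ℝ} (hx : x ∈ SG n t G) {v : Fin t → ℝ}
    (hv : v ⬝ᵥ v = 1) : IsPure n t G (evalState x v) :=
  ⟨isState_evalState hx hv, fun _ _ θ h₁ h₂ hθ₀ hθ₁ h =>
    ⟨h₁.eq_evalState_of_eq_smul_add_smul hv h₂ hθ₀ hθ₁ h,
      h₂.eq_evalState_of_eq_smul_add_smul (θ := 1 - θ) hv h₁ (by linarith) (by linarith)
        (by rw [h, sub_sub_cancel, add_comm])⟩⟩

end PointEvaluation

theorem stmt11 (G : Set (Matrix (Fin t) (Fin t) (MvPolynomial (Fin n) ℝ)))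
    (x : Fin n → ℝ) (hx : x ∈ SG n t G) (v : Fin t → ℝ) (hv : dotProduct v v = 1) :
    ∃ L : SymSub n t →ₗ[ℝ] ℝ, Represents n t L x v ∧ IsPure n t G L :=
  ⟨evalState x v, represents_evalState x v, isPure_evalState hx hv⟩
end

section
/- (Putinar) Suppose G ∪ {f} ⊆ ℝ[X₁,…,Xₙ] and the quadratic module Q_G ⊆ ℝ[X̄] is archimedean. If f(x) > 0 for all x ∈ S_G, then f ∈ Q_G. -/
/-!
Let `Q` be the quadratic module. If `-1 ∈ Q - Σ² f`, i.e. `s f = 1 + m` with `s` a sum of squares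
and `m ∈ Q`, then `f ∈ Q`: the archimedean property gives `f + k ∈ Q` for some constant `k`, and
multiplying by `(1 - t s)²` for a small fixed `t > 0` lowers the constant by `t`, until it becomes
negative. Otherwise Zorn's lemma extends `Q - Σ² f` to a maximal quadratic module `P ∌ -1`. Such a
`P` is total (`P ∪ -P` is the whole ring) and archimedean, so `a ↦ inf {r ∈ ℝ | r - a ∈ P}` is an
`ℝ`-algebra homomorphism `ℝ[X̄] → ℝ` that is nonnegative on `P`, i.e. evaluation at a point
`x ∈ S_G` with `f(x) ≤ 0`.
-/

open MvPolynomial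

/-- Membership in the quadratic module `Q_G` generated by `G` in `ℝ[X̄]`. -/
def InQ (n : ℕ) (G : Set (MvPolynomial (Fin n) ℝ)) (f : MvPolynomial (Fin n) ℝ) : Prop :=
  ∃ (N : ℕ) (g p : Fin N → MvPolynomial (Fin n) ℝ),
    (∀ i, g i = 1 ∨ g i ∈ G) ∧ f = ∑ i, (p i) ^ 2 * g i

section CommSemiring

variable {A : Type*} [CommSemiring A]

structure IsQuadraticModule_s15 (P : Set A) : Prop where
  add_mem : ∀ {a b : A}, a ∈ P → b ∈ P → a + b ∈ P
  sq_mul_mem : ∀ (q : A) {a : A}, a ∈ P → q ^ 2 * a ∈ P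
  one_mem : (1 : A) ∈ P

namespace IsQuadraticModule_s15

variable {P : Set A} (hP : IsQuadraticModule_s15 P)
include hP

theorem zero_mem_s15 : (0 : A) ∈ P := by
  simpa using hP.sq_mul_mem 0 hP.one_mem

theorem sq_mem (q : A) : q ^ 2 ∈ P := by
  simpa using hP.sq_mul_mem q hP.one_mem

theorem isSumSq_mul_mem {s a : A} (hs : IsSumSq s) (ha : a ∈ P) : s * a ∈ P := by
  induction hs with
  | zero => simpa using hP.zero_mem_s15
  | sq_add b _ ih => simpa [add_mul, sq] using hP.add_mem (hP.sq_mul_mem b ha) ih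

theorem mem_of_isSumSq {s : A} (hs : IsSumSq s) : s ∈ P := by
  simpa using hP.isSumSq_mul_mem hs hP.one_mem

end IsQuadraticModule_s15

end CommSemiring

section CommRing

variable {A : Type*} [CommRing A]

namespace IsQuadraticModule_s15

variable {P : Set A} (hP : IsQuadraticModule_s15 P)
include hP

theorem mul_mem_of_mem_of_neg_mem (h2 : IsUnit (2 : A)) {a : A} (ha : a ∈ P) (hna : -a ∈ P)
    (b : A) : a * b ∈ P := by
  obtain ⟨u, hu⟩ := h2.exists_left_inv
  have := hP.add_mem (hP.sq_mul_mem (u * (b + 1)) ha) (hP.sq_mul_mem (u * (b - 1)) hna)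
  convert this using 1
  linear_combination -b * a * (u * 2 + 1) * hu

end IsQuadraticModule_s15

def IsArchimedean (P : Set A) : Prop := ∀ a : A, ∃ N : ℕ, (N : A) - a ∈ P

theorem IsArchimedean.mono {P P' : Set A} (hP : IsArchimedean P) (h : P ⊆ P') :
    IsArchimedean P' :=
  fun a ↦ (hP a).imp fun _ hN ↦ h hN

theorem IsQuadraticModule_s15.isArchimedean_of_forall_natCast_sub_sq_mem {P : Set A}
    (hP : IsQuadraticModule_s15 P) (h2 : IsUnit (2 : A)) (h : ∀ a : A, ∃ N : ℕ, (N : A) - a ^ 2 ∈ P) :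
    IsArchimedean P := by
  intro a
  obtain ⟨u, hu⟩ := h2.exists_left_inv
  obtain ⟨N, hN⟩ := h (u * (a + 1))
  refine ⟨N, ?_⟩
  have := hP.add_mem hN (hP.sq_mem (u * (a - 1)))
  convert this using 1
  linear_combination a * (u * 2 + 1) * hu

def quadraticAdjoin (P : Set A) (b : A) : Set A :=
  {x | ∃ p ∈ P, ∃ s, IsSumSq s ∧ x = p + s * b}

theorem subset_quadraticAdjoin (P : Set A) (b : A) : P ⊆ quadraticAdjoin P b :=
  fun p hp ↦ ⟨p, hp, 0, .zero, by ring⟩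

theorem isQuadraticModule_quadraticAdjoin {P : Set A} (hP : IsQuadraticModule_s15 P) (b : A) :
    IsQuadraticModule_s15 (quadraticAdjoin P b) where
  add_mem := by
    rintro _ _ ⟨p₁, hp₁, s₁, hs₁, rfl⟩ ⟨p₂, hp₂, s₂, hs₂, rfl⟩
    exact ⟨p₁ + p₂, hP.add_mem hp₁ hp₂, s₁ + s₂, hs₁.add hs₂, by ring⟩
  sq_mul_mem := by
    rintro q _ ⟨p, hp, s, hs, rfl⟩
    exact ⟨q ^ 2 * p, hP.sq_mul_mem q hp, q ^ 2 * s, (IsSquare.sq q).isSumSq.mul hs, by ring⟩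
  one_mem := subset_quadraticAdjoin P b hP.one_mem

theorem IsQuadraticModule_s15.mem_quadraticAdjoin_self {P : Set A} (hP : IsQuadraticModule_s15 P)
    (b : A) : b ∈ quadraticAdjoin P b :=
  ⟨0, hP.zero_mem_s15, 1, .one, by ring⟩

theorem isQuadraticModule_sUnion {c : Set (Set A)} (hc : ∀ P ∈ c, IsQuadraticModule_s15 P)
    (hchain : IsChain (· ⊆ ·) c) (hne : c.Nonempty) : IsQuadraticModule_s15 (⋃₀ c) where
  add_mem := by
    rintro a b ⟨P₁, hP₁, ha⟩ ⟨P₂, hP₂, hb⟩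
    rcases hchain.total hP₁ hP₂ with h | h
    · exact ⟨P₂, hP₂, (hc P₂ hP₂).add_mem (h ha) hb⟩
    · exact ⟨P₁, hP₁, (hc P₁ hP₁).add_mem ha (h hb)⟩
  sq_mul_mem := by
    rintro q a ⟨P, hP, ha⟩
    exact ⟨P, hP, (hc P hP).sq_mul_mem q ha⟩
  one_mem := by
    obtain ⟨P, hP⟩ := hne
    exact ⟨P, hP, (hc P hP).one_mem⟩

theorem IsQuadraticModule_s15.exists_maximal_superset {Q : Set A} (hQ : IsQuadraticModule_s15 Q)
    (hQ1 : (-1 : A) ∉ Q) :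
    ∃ P, Q ⊆ P ∧ Maximal (fun P : Set A ↦ IsQuadraticModule_s15 P ∧ (-1 : A) ∉ P) P := by
  refine zorn_subset_nonempty {P | IsQuadraticModule_s15 P ∧ (-1 : A) ∉ P}
    (fun c hc hchain hne ↦ ⟨⋃₀ c, ⟨?_, ?_⟩, fun _ ↦ Set.subset_sUnion_of_mem⟩) Q ⟨hQ, hQ1⟩
  · exact isQuadraticModule_sUnion (fun P hP ↦ (hc hP).1) hchain hne
  · rintro ⟨P, hP, h⟩
    exact (hc hP).2 h

section Maximal

variable {P : Set A} (hP : Maximal (fun P : Set A ↦ IsQuadraticModule_s15 P ∧ (-1 : A) ∉ P) P)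
include hP

theorem Maximal.neg_one_mem_quadraticAdjoin {b : A} (hb : b ∉ P) :
    (-1 : A) ∈ quadraticAdjoin P b := by
  by_contra h
  have := hP.eq_of_subset ⟨isQuadraticModule_quadraticAdjoin hP.prop.1 b, h⟩
    (subset_quadraticAdjoin P b)
  exact hb (this ▸ hP.prop.1.mem_quadraticAdjoin_self b)

theorem Maximal.mem_or_neg_mem (h2 : IsUnit (2 : A)) (b : A) : b ∈ P ∨ -b ∈ P := by
  rw [or_iff_not_imp_left]
  intro hb
  by_contra hnb
  obtain ⟨hQM, hP1⟩ := hP.prop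
  obtain ⟨m, hm, s, hs, h⟩ := hP.neg_one_mem_quadraticAdjoin hb
  obtain ⟨m', hm', s', hs', h'⟩ := hP.neg_one_mem_quadraticAdjoin hnb
  -- `s` lies in the support `P ∩ -P`, which is an ideal; hence `-1 = m + s * b ∈ P`.
  have hns : -s ∈ P := by
    convert hQM.add_mem (hQM.add_mem (hQM.isSumSq_mul_mem hs' hm) (hQM.isSumSq_mul_mem hs hm'))
      (hQM.mem_of_isSumSq hs') using 1
    linear_combination s' * h + s * h'
  exact hP1 (h ▸ hQM.add_mem hm (hQM.mul_mem_of_mem_of_neg_mem h2 (hQM.mem_of_isSumSq hs) hns b))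

end Maximal

end CommRing

theorem exists_neg_mem_of_forall_sub_mem {S : Set ℝ} {k t : ℝ} (ht : 0 < t) (hk : k ∈ S)
    (hstep : ∀ l ∈ S, 0 ≤ l → l ≤ k → l - t ∈ S) : ∃ l ∈ S, l < 0 := by
  by_contra! hS
  have hmem : ∀ j : ℕ, k - j * t ∈ S := by
    intro j
    induction j with
    | zero => simpa using hk
    | succ j ih =>
      convert hstep _ ih (hS _ ih) (sub_le_self _ (by positivity)) using 1
      push_cast
      ring
  obtain ⟨j, hj⟩ := exists_nat_gt (k / t)
  rw [div_lt_iff₀ ht] at hj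
  linarith [hS _ (hmem j)]

section RealAlgebra

variable {A : Type*} [CommRing A] [Algebra ℝ A]

open scoped algebraMap

theorem isUnit_two_of_algebra_real : IsUnit (2 : A) := by
  simpa only [map_ofNat] using (isUnit_of_invertible (2 : ℝ)).map (algebraMap ℝ A)

theorem IsArchimedean.exists_coe_sub_mem {P : Set A} (harch : IsArchimedean P) (a : A) :
    ∃ r : ℝ, (r : A) - a ∈ P :=
  (harch a).imp' (↑) fun N hN ↦ by rwa [algebraMap.coe_natCast]

noncomputable def infUpperBound (P : Set A) (a : A) : ℝ := sInf {r : ℝ | (r : A) - a ∈ P}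

namespace IsQuadraticModule_s15

variable {P : Set A} (hP : IsQuadraticModule_s15 P)
include hP

theorem coe_mul_mem {c : ℝ} (hc : 0 ≤ c) {a : A} (ha : a ∈ P) : (c : A) * a ∈ P := by
  simpa [← algebraMap.coe_pow, Real.sq_sqrt hc] using hP.sq_mul_mem (Real.sqrt c : A) ha

theorem coe_mem {c : ℝ} (hc : 0 ≤ c) : (c : A) ∈ P := by
  simpa using hP.coe_mul_mem hc hP.one_mem

theorem nonneg_of_coe_mem (hP1 : (-1 : A) ∉ P) {c : ℝ} (hc : (c : A) ∈ P) : 0 ≤ c := by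
  by_contra! h
  apply hP1
  convert hP.coe_mul_mem (neg_nonneg.2 (inv_nonpos.2 h.le)) hc using 1
  rw [← algebraMap.coe_mul, neg_mul, inv_mul_cancel₀ h.ne, algebraMap.coe_neg, algebraMap.coe_one]

-- Expanding `(1 - t s)² (f + l)` with `s f = 1 + m` gives `f + l - 2t` up to elements of `P` and
-- the terms `t² (s² f + l s²)`, which the bounds `c₁`, `c₂` absorb.
theorem add_coe_sub_mem_of_mul_eq_one_add {s m f : A} (hs : IsSumSq s) (hm : m ∈ P)
    (hsf : s * f = 1 + m) {c₁ c₂ l t : ℝ} (h₁ : (c₁ : A) - s ^ 2 * f ∈ P)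
    (h₂ : (c₂ : A) - s ^ 2 ∈ P) (hl : 0 ≤ l) (ht : 0 ≤ t) (htc : t * (c₁ + l * c₂) ≤ 1)
    (hf : f + l ∈ P) : f + ↑(l - t) ∈ P := by
  have e₁ := hP.sq_mul_mem (1 - t * s) hf
  have e₂ := hP.coe_mul_mem (c := 2 * t) (by positivity) hm
  have e₃ := hP.coe_mul_mem (c := t ^ 2) (by positivity) h₁
  have e₄ := hP.coe_mul_mem (c := l * t ^ 2) (by positivity) h₂
  have e₅ := hP.coe_mul_mem (c := 2 * l * t) (by positivity) (hP.mem_of_isSumSq hs)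
  have e₆ := hP.coe_mem (c := t * (1 - t * (c₁ + l * c₂))) (mul_nonneg ht (by linarith))
  convert hP.add_mem (hP.add_mem (hP.add_mem (hP.add_mem (hP.add_mem e₁ e₂) e₃) e₄) e₅) e₆ using 1
  push_cast [map_ofNat]
  linear_combination 2 * (t : A) * hsf

theorem mem_of_isSumSq_mul_eq_one_add (harch : IsArchimedean P) {s m f : A} (hs : IsSumSq s)
    (hm : m ∈ P) (hsf : s * f = 1 + m) : f ∈ P := by
  obtain ⟨k, hk⟩ := harch (-f)
  obtain ⟨c₁, h₁⟩ := harch (s ^ 2 * f)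
  obtain ⟨c₂, h₂⟩ := harch (s ^ 2)
  have ht : 0 < ((c₁ + k * c₂ + 1 : ℝ))⁻¹ := by positivity
  obtain ⟨l, hl, hl0⟩ := exists_neg_mem_of_forall_sub_mem (S := {l : ℝ | f + l ∈ P}) ht
    (k := k) (by simpa [add_comm] using hk) fun l hl hl0 hlk ↦
      hP.add_coe_sub_mem_of_mul_eq_one_add (c₁ := c₁) (c₂ := c₂) hs hm hsf (by exact_mod_cast h₁)
        (by exact_mod_cast h₂) hl0 ht.le (by
          rw [inv_mul_le_iff₀ (by positivity)]
          nlinarith [(c₂.cast_nonneg : (0 : ℝ) ≤ c₂)]) hl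
  simpa using hP.add_mem hl (hP.coe_mem (neg_nonneg.2 hl0.le))

theorem le_of_coe_sub_mem_of_sub_coe_mem (hP1 : (-1 : A) ∉ P) {a : A} {r r' : ℝ}
    (h : (r : A) - a ∈ P) (h' : a - r' ∈ P) : r' ≤ r :=
  sub_nonneg.1 <| hP.nonneg_of_coe_mem hP1 <| by
    convert hP.add_mem h h' using 1
    push_cast
    ring

theorem infUpperBound_le (hP1 : (-1 : A) ∉ P) (harch : IsArchimedean P) {a : A} {r : ℝ}
    (h : (r : A) - a ∈ P) : infUpperBound P a ≤ r := by
  obtain ⟨N, hN⟩ := harch (-a)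
  refine csInf_le ⟨-N, fun r' hr' ↦ hP.le_of_coe_sub_mem_of_sub_coe_mem hP1 hr' ?_⟩ h
  convert hN using 1
  push_cast
  ring

theorem le_infUpperBound (hP1 : (-1 : A) ∉ P) (harch : IsArchimedean P) {a : A} {r : ℝ}
    (h : a - r ∈ P) : r ≤ infUpperBound P a := by
  exact le_csInf (harch.exists_coe_sub_mem a) fun r' hr' ↦
    hP.le_of_coe_sub_mem_of_sub_coe_mem hP1 hr' h

theorem coe_sub_mem_of_infUpperBound_lt (harch : IsArchimedean P) {a : A} {r : ℝ}
    (h : infUpperBound P a < r) : (r : A) - a ∈ P := by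
  obtain ⟨r', hr', hlt⟩ := exists_lt_of_csInf_lt (harch.exists_coe_sub_mem a) h
  convert hP.add_mem hr' (hP.coe_mem (sub_nonneg.2 hlt.le)) using 1
  push_cast
  ring

theorem sub_coe_mem_of_lt_infUpperBound (hP1 : (-1 : A) ∉ P) (harch : IsArchimedean P)
    (htot : ∀ a : A, a ∈ P ∨ -a ∈ P) {a : A} {r : ℝ} (h : r < infUpperBound P a) :
    a - r ∈ P :=
  (htot _).resolve_right fun h' ↦
    (hP.infUpperBound_le hP1 harch (by rwa [neg_sub] at h')).not_gt h

theorem infUpperBound_eq (hP1 : (-1 : A) ∉ P) (harch : IsArchimedean P) {a : A} {t : ℝ}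
    (hup : ∀ r, t < r → (r : A) - a ∈ P) (hlow : ∀ r < t, a - r ∈ P) :
    infUpperBound P a = t :=
  le_antisymm (le_of_forall_gt_imp_ge_of_dense fun r hr ↦ hP.infUpperBound_le hP1 harch (hup r hr))
    (le_of_forall_lt_imp_le_of_dense fun r hr ↦ hP.le_infUpperBound hP1 harch (hlow r hr))

theorem infUpperBound_nonneg (hP1 : (-1 : A) ∉ P) (harch : IsArchimedean P) {a : A}
    (ha : a ∈ P) : 0 ≤ infUpperBound P a :=
  hP.le_infUpperBound hP1 harch (by simpa using ha)

theorem infUpperBound_coe (hP1 : (-1 : A) ∉ P) (harch : IsArchimedean P) (c : ℝ) :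
    infUpperBound P (c : A) = c := by
  refine hP.infUpperBound_eq hP1 harch (fun r hr ↦ ?_) fun r hr ↦ ?_
  · simpa using hP.coe_mem (sub_nonneg.2 hr.le)
  · simpa using hP.coe_mem (sub_nonneg.2 hr.le)

section Total

variable (hP1 : (-1 : A) ∉ P) (harch : IsArchimedean P) (htot : ∀ a : A, a ∈ P ∨ -a ∈ P)
include hP1 harch htot

theorem infUpperBound_add (a b : A) :
    infUpperBound P (a + b) = infUpperBound P a + infUpperBound P b := by
  refine hP.infUpperBound_eq hP1 harch (fun r hr ↦ ?_) fun r hr ↦ ?_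
  · obtain ⟨r₁, r₂, h₁, h₂, rfl⟩ : ∃ r₁ r₂, infUpperBound P a < r₁ ∧ infUpperBound P b < r₂ ∧
        r₁ + r₂ = r :=
      ⟨_, _, lt_add_of_pos_right _ (half_pos (sub_pos.2 hr)),
        lt_add_of_pos_right _ (half_pos (sub_pos.2 hr)), by ring⟩
    convert hP.add_mem (hP.coe_sub_mem_of_infUpperBound_lt harch h₁)
      (hP.coe_sub_mem_of_infUpperBound_lt harch h₂) using 1
    push_cast
    ring
  · obtain ⟨r₁, r₂, h₁, h₂, rfl⟩ : ∃ r₁ r₂, r₁ < infUpperBound P a ∧ r₂ < infUpperBound P b ∧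
        r₁ + r₂ = r :=
      ⟨_, _, sub_lt_self _ (half_pos (sub_pos.2 hr)),
        sub_lt_self _ (half_pos (sub_pos.2 hr)), by ring⟩
    convert hP.add_mem (hP.sub_coe_mem_of_lt_infUpperBound hP1 harch htot h₁)
      (hP.sub_coe_mem_of_lt_infUpperBound hP1 harch htot h₂) using 1
    push_cast
    ring

theorem infUpperBound_neg (a : A) : infUpperBound P (-a) = -infUpperBound P a := by
  refine hP.infUpperBound_eq hP1 harch (fun r hr ↦ ?_) fun r hr ↦ ?_
  · convert hP.sub_coe_mem_of_lt_infUpperBound hP1 harch htot (r := -r) (by linarith) using 1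
    push_cast
    ring
  · convert hP.coe_sub_mem_of_infUpperBound_lt harch (r := -r) (by linarith) using 1
    push_cast
    ring

theorem infUpperBound_coe_mul_of_pos {c : ℝ} (hc : 0 < c) (a : A) :
    infUpperBound P (c * a) = c * infUpperBound P a := by
  refine hP.infUpperBound_eq hP1 harch (fun r hr ↦ ?_) fun r hr ↦ ?_
  · have := hP.coe_mul_mem hc.le
      (hP.coe_sub_mem_of_infUpperBound_lt harch (r := r / c) ((lt_div_iff₀' hc).2 hr))
    rwa [mul_sub, ← algebraMap.coe_mul, mul_div_cancel₀ _ hc.ne'] at this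
  · have := hP.coe_mul_mem hc.le
      (hP.sub_coe_mem_of_lt_infUpperBound hP1 harch htot (r := r / c) ((div_lt_iff₀' hc).2 hr))
    rwa [mul_sub, ← algebraMap.coe_mul, mul_div_cancel₀ _ hc.ne'] at this

theorem infUpperBound_coe_mul (c : ℝ) (a : A) :
    infUpperBound P (c * a) = c * infUpperBound P a := by
  rcases lt_trichotomy c 0 with hc | rfl | hc
  · rw [show (c : A) * a = ((-c : ℝ) : A) * -a by push_cast; ring,
      hP.infUpperBound_coe_mul_of_pos hP1 harch htot (neg_pos.2 hc),
      hP.infUpperBound_neg hP1 harch htot]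
    ring
  · simpa using hP.infUpperBound_coe hP1 harch 0
  · exact hP.infUpperBound_coe_mul_of_pos hP1 harch htot hc a

-- With `β = infUpperBound P b`, both `b - (β - ε)` and `(β + ε) - b` lie in `P`; weighting them by
-- the squares `((c + 1) / 2)²` and `((c - 1) / 2)²` shows `c * (b - β) ≥ -ε K` for a fixed `K`.
theorem infUpperBound_mul_sub_nonneg (b c : A) :
    0 ≤ infUpperBound P (c * (b - infUpperBound P b)) := by
  set β := infUpperBound P b
  obtain ⟨u, hu⟩ := (isUnit_two_of_algebra_real (A := A)).exists_left_inv
  set K := infUpperBound P ((u * (c + 1)) ^ 2 + (u * (c - 1)) ^ 2)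
  have hK : 0 ≤ K := hP.infUpperBound_nonneg hP1 harch (hP.add_mem (hP.sq_mem _) (hP.sq_mem _))
  have hbound : ∀ ε > 0, 0 ≤ infUpperBound P (c * (b - β)) + ε * K := by
    intro ε hε
    have hmem := hP.add_mem
      (hP.sq_mul_mem (u * (c + 1))
        (hP.sub_coe_mem_of_lt_infUpperBound hP1 harch htot (a := b) (r := β - ε) (by linarith)))
      (hP.sq_mul_mem (u * (c - 1))
        (hP.coe_sub_mem_of_infUpperBound_lt harch (a := b) (r := β + ε) (by linarith)))
    have heq : (u * (c + 1)) ^ 2 * (b - ↑(β - ε)) + (u * (c - 1)) ^ 2 * (↑(β + ε) - b)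
        = c * (b - β) + (ε : A) * ((u * (c + 1)) ^ 2 + (u * (c - 1)) ^ 2) := by
      push_cast
      linear_combination c * (b - β) * (u * 2 + 1) * hu
    have := hP.infUpperBound_nonneg hP1 harch (heq ▸ hmem)
    rwa [hP.infUpperBound_add hP1 harch htot, hP.infUpperBound_coe_mul hP1 harch htot] at this
  refine le_of_forall_pos_le_add fun ε hε ↦ ?_
  have h₁ := hbound (ε / (K + 1)) (by positivity)
  have h₂ : ε / (K + 1) * K ≤ ε := by
    rw [div_mul_eq_mul_div, div_le_iff₀ (by positivity)]
    nlinarith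
  linarith

theorem infUpperBound_mul (a b : A) :
    infUpperBound P (a * b) = infUpperBound P a * infUpperBound P b := by
  have h₁ := hP.infUpperBound_mul_sub_nonneg hP1 harch htot b a
  have h₂ := hP.infUpperBound_mul_sub_nonneg hP1 harch htot b (-a)
  rw [neg_mul, hP.infUpperBound_neg hP1 harch htot] at h₂
  rw [show a * b = a * (b - infUpperBound P b) + (infUpperBound P b : A) * a by ring,
    hP.infUpperBound_add hP1 harch htot, hP.infUpperBound_coe_mul hP1 harch htot]
  linarith

theorem exists_algHom_nonneg : ∃ ψ : A →ₐ[ℝ] ℝ, ∀ a ∈ P, 0 ≤ ψ a :=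
  ⟨{ toFun := infUpperBound P
     map_one' := by simpa using hP.infUpperBound_coe hP1 harch 1
     map_mul' := hP.infUpperBound_mul hP1 harch htot
     map_zero' := by simpa using hP.infUpperBound_coe hP1 harch 0
     map_add' := hP.infUpperBound_add hP1 harch htot
     commutes' := hP.infUpperBound_coe hP1 harch },
    fun _ ↦ hP.infUpperBound_nonneg hP1 harch⟩

end Total

end IsQuadraticModule_s15

theorem IsQuadraticModule_s15.mem_of_forall_algHom_pos {Q : Set A} (hQ : IsQuadraticModule_s15 Q)
    (harch : IsArchimedean Q) {f : A}
    (hf : ∀ ψ : A →ₐ[ℝ] ℝ, (∀ a ∈ Q, 0 ≤ ψ a) → 0 < ψ f) : f ∈ Q := by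
  by_cases h : (-1 : A) ∈ quadraticAdjoin Q (-f)
  · obtain ⟨m, hm, s, hs, h⟩ := h
    exact hQ.mem_of_isSumSq_mul_eq_one_add harch hs hm (by linear_combination h)
  · obtain ⟨P, hQP, hP⟩ := (isQuadraticModule_quadraticAdjoin hQ (-f)).exists_maximal_superset h
    have hQP' : Q ⊆ P := (subset_quadraticAdjoin Q (-f)).trans hQP
    obtain ⟨ψ, hψ⟩ := hP.prop.1.exists_algHom_nonneg hP.prop.2 (harch.mono hQP')
      (hP.mem_or_neg_mem isUnit_two_of_algebra_real)
    have hpos := hf ψ fun a ha ↦ hψ a (hQP' ha)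
    have hneg := hψ _ (hQP (hQ.mem_quadraticAdjoin_self (-f)))
    rw [map_neg] at hneg
    linarith

end RealAlgebra

theorem isQuadraticModule_setOf_inQ (n : ℕ) (G : Set (MvPolynomial (Fin n) ℝ)) :
    IsQuadraticModule_s15 {f | InQ n G f} where
  add_mem := by
    rintro _ _ ⟨N₁, g₁, p₁, hg₁, rfl⟩ ⟨N₂, g₂, p₂, hg₂, rfl⟩
    refine ⟨N₁ + N₂, Fin.append g₁ g₂, Fin.append p₁ p₂,
      Fin.addCases (fun i ↦ by simpa using hg₁ i) (fun i ↦ by simpa using hg₂ i), ?_⟩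
    simp [Fin.sum_univ_add]
  sq_mul_mem := by
    rintro q _ ⟨N, g, p, hg, rfl⟩
    exact ⟨N, g, q • p, hg, by simp [Finset.mul_sum, mul_pow, mul_assoc]⟩
  one_mem := ⟨1, fun _ ↦ 1, fun _ ↦ 1, fun _ ↦ .inl rfl, by simp⟩

theorem subset_setOf_inQ (n : ℕ) (G : Set (MvPolynomial (Fin n) ℝ)) : G ⊆ {f | InQ n G f} :=
  fun g hg ↦ ⟨1, fun _ ↦ g, fun _ ↦ 1, fun _ ↦ .inr hg, by simp⟩

/-- **Putinar's Positivstellensatz.** If `Q_G` is archimedean and `f > 0` on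
`S_G = {x | ∀ g ∈ G, g(x) ≥ 0}`, then `f ∈ Q_G`. -/
theorem stmt15 (n : ℕ) (G : Set (MvPolynomial (Fin n) ℝ)) (f : MvPolynomial (Fin n) ℝ)
    (harch : ∀ p : MvPolynomial (Fin n) ℝ,
      ∃ N : ℕ, InQ n G ((N : MvPolynomial (Fin n) ℝ) - p ^ 2))
    (hpos : ∀ x : Fin n → ℝ, (∀ g ∈ G, 0 ≤ MvPolynomial.eval x g) → 0 < MvPolynomial.eval x f) :
    InQ n G f := by
  have hQ := isQuadraticModule_setOf_inQ n G
  refine hQ.mem_of_forall_algHom_pos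
    (hQ.isArchimedean_of_forall_natCast_sub_sq_mem isUnit_two_of_algebra_real harch) fun ψ hψ ↦ ?_
  have heval : ∀ p, eval (ψ ∘ X) p = ψ p := fun p ↦ (DFunLike.congr_fun (aeval_unique ψ) p).symm
  rw [← heval]
  exact hpos _ fun g hg ↦ heval g ▸ hψ g (subset_setOf_inQ n G hg)
end

section
/- (Brumfiel) Let R be a commutative ℚ-algebra and Q ⊆ R a quadratic module. Then the ring of bounded elements H_Q(R) = {a ∈ R : ∃N ∈ ℕ, N − a² ∈ Q} is integrally closed in R. -/
/-!
Put `b = a²` and `xᵢ = cᵢ aⁱ`, so that `∑ xᵢ = -aᵏ`. The Lagrange identity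
`∑ᵢ ∑ⱼ (xᵢ - xⱼ)² = 2 (k ∑ xᵢ² - (∑ xᵢ)²)` together with `xᵢ² = cᵢ² bⁱ ≤ N bⁱ` gives
`bᵏ ≤ M (1 + b + ⋯ + bᵏ⁻¹)` in the order defined by `Q`. Completing the square,
`bⁿ (b - (M + 1))² ∈ Q` trades the top power `bⁿ⁺²` for `bⁿ⁺¹` at the cost of a larger `M`,
and descending to `n = 0` leaves `b ≤ M`.
-/

open Finset

theorem Finset.sum_sum_sub_sq {R ι : Type*} [CommRing R] (s : Finset ι) (x : ι → R) :
    ∑ i ∈ s, ∑ j ∈ s, (x i - x j) ^ 2 = 2 * (#s * ∑ i ∈ s, x i ^ 2 - (∑ i ∈ s, x i) ^ 2) := by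
  simp only [sub_sq, sum_add_distrib, sum_sub_distrib, sum_const, nsmul_eq_mul, ← mul_sum,
    ← sum_mul]
  ring

structure IsQuadraticModule_s18 {R : Type*} [CommRing R] (Q : Set R) : Prop where
  one_mem : (1 : R) ∈ Q
  add_mem : ∀ q ∈ Q, ∀ q' ∈ Q, q + q' ∈ Q
  sq_mul_mem : ∀ a : R, ∀ q ∈ Q, a ^ 2 * q ∈ Q

namespace IsQuadraticModule_s18

variable {R : Type*} [CommRing R] {Q : Set R}

theorem sq_mem_s18 (hQ : IsQuadraticModule_s18 Q) (a : R) : a ^ 2 ∈ Q := by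
  simpa using hQ.sq_mul_mem a 1 hQ.one_mem

theorem sum_mem (hQ : IsQuadraticModule_s18 Q) {ι : Type*} (s : Finset ι) {f : ι → R}
    (hf : ∀ i ∈ s, f i ∈ Q) : ∑ i ∈ s, f i ∈ Q := by
  refine sum_induction f (· ∈ Q) (fun q q' hq hq' => hQ.add_mem q hq q' hq') ?_ hf
  simpa using hQ.sq_mem_s18 0

theorem natCast_mul_mem_s18 (hQ : IsQuadraticModule_s18 Q) (n : ℕ) {q : R} (hq : q ∈ Q) :
    (n : R) * q ∈ Q := by
  simpa using hQ.sum_mem (range n) fun _ _ => hq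

theorem natCast_mem_s18 (hQ : IsQuadraticModule_s18 Q) (n : ℕ) : (n : R) ∈ Q := by
  simpa using hQ.natCast_mul_mem_s18 n hQ.one_mem

theorem natCast_sub_mem_of_le_s18 (hQ : IsQuadraticModule_s18 Q) {y : R} {N M : ℕ}
    (hy : (N : R) - y ∈ Q) (hNM : N ≤ M) : (M : R) - y ∈ Q := by
  have h := hQ.add_mem _ hy _ (hQ.natCast_mem_s18 (M - N))
  rwa [Nat.cast_sub hNM, sub_add_sub_cancel'] at h

theorem exists_forall_natCast_sub_mem {ι : Type*} [Fintype ι] (hQ : IsQuadraticModule_s18 Q)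
    {f : ι → R} (hf : ∀ i, ∃ N : ℕ, (N : R) - f i ∈ Q) :
    ∃ N : ℕ, ∀ i, (N : R) - f i ∈ Q := by
  choose N hN using hf
  exact ⟨∑ i, N i, fun i =>
    hQ.natCast_sub_mem_of_le_s18 (hN i) (single_le_sum (fun j _ => Nat.zero_le (N j)) (mem_univ i))⟩

theorem geom_bound_of_geom_bound_succ (hQ : IsQuadraticModule_s18 Q) {b : R}
    (hb : ∀ n, b ^ n ∈ Q) {N n : ℕ}
    (h : (N : R) * ∑ i ∈ range (n + 2), b ^ i - b ^ (n + 2) ∈ Q) :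
    ((N + (N + 1) ^ 2 : ℕ) : R) * ∑ i ∈ range (n + 1), b ^ i - b ^ (n + 1) ∈ Q := by
  have hsq := hQ.sq_mul_mem (b - (N + 1)) _ (hb n)
  have hmid := hQ.natCast_mul_mem_s18 (N + 1) (hb (n + 1))
  have hlow := hQ.natCast_mul_mem_s18 ((N + 1) ^ 2) (hQ.sum_mem (range n) fun i _ => hb i)
  convert hQ.add_mem _ (hQ.add_mem _ (hQ.add_mem _ h _ hsq) _ hmid) _ hlow using 1
  simp only [sum_range_succ]
  push_cast
  ring

theorem exists_natCast_sub_mem_of_geom_bound (hQ : IsQuadraticModule_s18 Q) {b : R}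
    (hb : ∀ n, b ^ n ∈ Q) (n N : ℕ)
    (h : (N : R) * ∑ i ∈ range (n + 1), b ^ i - b ^ (n + 1) ∈ Q) :
    ∃ M : ℕ, (M : R) - b ∈ Q := by
  induction n generalizing N with
  | zero => exact ⟨N, by simpa using h⟩
  | succ n ih => exact ih _ (hQ.geom_bound_of_geom_bound_succ hb h)

theorem geom_bound_of_root (hQ : IsQuadraticModule_s18 Q) {k N : ℕ} {c : Fin k → R}
    (hc : ∀ i, (N : R) - c i ^ 2 ∈ Q) {a : R} (hroot : a ^ k + ∑ i, c i * a ^ (i : ℕ) = 0) :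
    ((2 * k * N : ℕ) : R) * ∑ i ∈ range k, (a ^ 2) ^ i - (a ^ 2) ^ k ∈ Q := by
  set x : Fin k → R := fun i => c i * a ^ (i : ℕ)
  have hsum : (∑ i, x i) ^ 2 = (a ^ 2) ^ k := by
    rw [eq_neg_of_add_eq_zero_right hroot]
    ring
  have hlagrange : ((2 * k : ℕ) : R) * ∑ i, x i ^ 2 - 2 * (a ^ 2) ^ k ∈ Q := by
    have h := hQ.sum_mem univ fun i _ => hQ.sum_mem univ fun j _ => hQ.sq_mem_s18 (x i - x j)
    rw [sum_sum_sub_sq, card_univ, Fintype.card_fin, hsum] at h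
    convert h using 1
    push_cast
    ring
  have hcoeff : ∑ i : Fin k, ((2 * k : ℕ) : R) * ((a ^ (i : ℕ)) ^ 2 * (N - c i ^ 2)) ∈ Q :=
    hQ.sum_mem univ fun i _ => hQ.natCast_mul_mem_s18 _ (hQ.sq_mul_mem _ _ (hc i))
  have hterm : ∀ i : Fin k, ((2 * k * N : ℕ) : R) * (a ^ 2) ^ (i : ℕ)
      = ((2 * k : ℕ) : R) * x i ^ 2 + ((2 * k : ℕ) : R) * ((a ^ (i : ℕ)) ^ 2 * (N - c i ^ 2)) := by
    intro i
    push_cast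
    ring
  convert hQ.add_mem _ (hQ.add_mem _ hlagrange _ hcoeff) _ (hQ.sq_mem_s18 (a ^ k)) using 1
  rw [← Fin.sum_univ_eq_sum_range, mul_sum, sum_congr rfl fun i _ => hterm i, sum_add_distrib,
    ← mul_sum]
  ring

end IsQuadraticModule_s18

theorem stmt18_general (R : Type*) [CommRing R] (Q : Set R)
    (h1 : (1 : R) ∈ Q)
    (hadd : ∀ q ∈ Q, ∀ q' ∈ Q, q + q' ∈ Q)
    (hsq : ∀ a : R, ∀ q ∈ Q, a ^ 2 * q ∈ Q)
    (a : R)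
    (hint : ∃ (k : ℕ) (c : Fin k → R), 0 < k ∧
      (∀ i, ∃ N : ℕ, (N : R) - (c i) ^ 2 ∈ Q) ∧
      a ^ k + ∑ i : Fin k, c i * a ^ (i : ℕ) = 0) :
    ∃ N : ℕ, (N : R) - a ^ 2 ∈ Q := by
  have hQ : IsQuadraticModule_s18 Q := ⟨h1, hadd, hsq⟩
  obtain ⟨k, c, hk, hc, hroot⟩ := hint
  obtain ⟨N, hN⟩ := hQ.exists_forall_natCast_sub_mem hc
  obtain ⟨n, rfl⟩ := Nat.exists_eq_succ_of_ne_zero hk.ne'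
  refine hQ.exists_natCast_sub_mem_of_geom_bound (fun m => ?_) n _ (hQ.geom_bound_of_root hN hroot)
  rw [← pow_mul, mul_comm, pow_mul]
  exact hQ.sq_mem_s18 _

/-- **Brumfiel's lemma.** Let `R` be a commutative `ℚ`-algebra and `Q ⊆ R` a quadratic
module. Then the ring of bounded elements `H_Q(R) = {a | ∃ N, N − a² ∈ Q}` is integrally
closed in `R`: every `a ∈ R` satisfying a monic polynomial equation with coefficients in
`H_Q(R)` lies in `H_Q(R)`. -/
theorem stmt18 (R : Type*) [CommRing R] [Algebra ℚ R] (Q : Set R)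
    (h1 : (1 : R) ∈ Q)
    (hadd : ∀ q ∈ Q, ∀ q' ∈ Q, q + q' ∈ Q)
    (hsq : ∀ a : R, ∀ q ∈ Q, a ^ 2 * q ∈ Q)
    (a : R)
    (hint : ∃ (k : ℕ) (c : Fin k → R), 0 < k ∧
      (∀ i, ∃ N : ℕ, (N : R) - (c i) ^ 2 ∈ Q) ∧
      a ^ k + ∑ i : Fin k, c i * a ^ (i : ℕ) = 0) :
    ∃ N : ℕ, (N : R) - a ^ 2 ∈ Q :=
  stmt18_general R Q h1 hadd hsq a hint
end
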